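/- arXiv:2403.10483 — 3 statements merged into one kernel-verified Lean document; each statement's English description precedes it below -/
import Mathlib

section
/- Let m ≥ 2 be a fixed integer. Then for every ε > 0, (ε / ((m−1/2)(m−3/2))) · ∫_{{(x,y) ∈ ℝ² : x > 0, y > 0, x + y < 1/ε}} y^{2m−2} / ((x+y+1)^{m+1/2} (1 + 1/ε − x)^{m−3/2}) dx dy ≤ 1 / ((m−1/2)(m−3/2)²). -/
open MeasureTheory Real

/-- For a fixed integer `m ≥ 2` and every `ε > 0`:
`(ε/((m-1/2)(m-3/2))) ∫_{x>0, y>0, x+y<1/ε}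
   y^{2m-2}/((x+y+1)^{m+1/2}(1+1/ε-x)^{m-3/2}) dx dy
 ≤ 1/((m-1/2)(m-3/2)²)`. -/
theorem statement11 (m : ℕ) (hm : 2 ≤ m) (ε : ℝ) (hε : 0 < ε) :
    ε / (((m : ℝ) - 1 / 2) * ((m : ℝ) - 3 / 2)) *
      ∫ p in {p : ℝ × ℝ | 0 < p.1 ∧ 0 < p.2 ∧ p.1 + p.2 < 1 / ε},
        p.2 ^ (2 * m - 2) /
          ((p.1 + p.2 + 1) ^ ((m : ℝ) + 1 / 2) * (1 + 1 / ε - p.1) ^ ((m : ℝ) - 3 / 2)) ≤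
    1 / (((m : ℝ) - 1 / 2) * ((m : ℝ) - 3 / 2) ^ 2) := by
  have hm' : (2 : ℝ) ≤ (m : ℝ) := by exact_mod_cast hm
  set e : ℝ := 1 / ε with he_def
  have he : 0 < e := by positivity
  set a : ℝ := (m : ℝ) - 3 / 2 with ha_def
  have ha0 : 0 < a := by simp only [ha_def]; linarith
  have hm12 : (0 : ℝ) < (m : ℝ) - 1 / 2 := by linarith
  set S : Set (ℝ × ℝ) := {p : ℝ × ℝ | 0 < p.1 ∧ 0 < p.2 ∧ p.1 + p.2 < e} with hS_def
  have hS : MeasurableSet S := by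
    have : IsOpen S :=
      (isOpen_lt continuous_const continuous_fst).inter
        ((isOpen_lt continuous_const continuous_snd).inter
          (isOpen_lt (continuous_fst.add continuous_snd) continuous_const))
    exact this.measurableSet
  set f : ℝ × ℝ → ℝ := fun p =>
    p.2 ^ (2 * m - 2) /
      ((p.1 + p.2 + 1) ^ ((m : ℝ) + 1 / 2) * (1 + e - p.1) ^ a) with hf_def
  set g : ℝ × ℝ → ℝ := fun p => p.2 ^ ((m : ℝ) - 5 / 2) / (1 + e - p.1) ^ a with hg_def
  have hf_meas : Measurable f := by simp only [hf_def]; fun_prop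
  have hg_meas : Measurable fun p => ENNReal.ofReal (g p) := by simp only [hg_def]; fun_prop
  -- pointwise nonnegativity on S
  have hf0 : ∀ p ∈ S, 0 ≤ f p := by
    rintro ⟨x, y⟩ ⟨hx, hy, hxy⟩
    have h1 : (0 : ℝ) < x + y + 1 := by linarith
    have h2 : (0 : ℝ) < 1 + e - x := by linarith
    have := Real.rpow_pos_of_pos h1 ((m : ℝ) + 1 / 2)
    have := Real.rpow_pos_of_pos h2 a
    simp only [hf_def]
    positivity
  -- pointwise bound f ≤ g on S
  have hfg : ∀ p ∈ S, f p ≤ g p := by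
    rintro ⟨x, y⟩ ⟨hx, hy, hxy⟩
    have h1 : (0 : ℝ) < x + y + 1 := by linarith
    have h2 : (0 : ℝ) < 1 + e - x := by linarith
    have hB : (0 : ℝ) < (x + y + 1) ^ ((m : ℝ) + 1 / 2) := Real.rpow_pos_of_pos h1 _
    have hC : (0 : ℝ) < (1 + e - x) ^ a := Real.rpow_pos_of_pos h2 _
    have h2m : 2 ≤ 2 * m := by omega
    have hpow : (y : ℝ) ^ (2 * m - 2) =
        y ^ ((m : ℝ) + 1 / 2) * y ^ ((m : ℝ) - 5 / 2) := by
      rw [← Real.rpow_natCast y (2 * m - 2), ← Real.rpow_add hy]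
      congr 1
      rw [Nat.cast_sub h2m]
      push_cast
      ring
    have hyB : y ^ ((m : ℝ) + 1 / 2) ≤ (x + y + 1) ^ ((m : ℝ) + 1 / 2) :=
      Real.rpow_le_rpow hy.le (by linarith) (by linarith)
    have hD : (0 : ℝ) ≤ y ^ ((m : ℝ) - 5 / 2) := Real.rpow_nonneg hy.le _
    simp only [hf_def, hg_def]
    rw [hpow, div_le_div_iff₀ (by positivity) hC]
    calc y ^ ((m : ℝ) + 1 / 2) * y ^ ((m : ℝ) - 5 / 2) * (1 + e - x) ^ a
        = y ^ ((m : ℝ) + 1 / 2) * (y ^ ((m : ℝ) - 5 / 2) * (1 + e - x) ^ a) := by ring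
      _ ≤ (x + y + 1) ^ ((m : ℝ) + 1 / 2) * (y ^ ((m : ℝ) - 5 / 2) * (1 + e - x) ^ a) :=
          mul_le_mul_of_nonneg_right hyB (by positivity)
      _ = y ^ ((m : ℝ) - 5 / 2) * ((x + y + 1) ^ ((m : ℝ) + 1 / 2) * (1 + e - x) ^ a) := by ring
  -- key bound on the integral
  have key : (∫ p in S, f p) ≤ 1 / (ε * a) := by
    rw [integral_eq_lintegral_of_nonneg_ae
      ((ae_restrict_iff' hS).mpr (Filter.Eventually.of_forall hf0))
      hf_meas.aestronglyMeasurable.restrict]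
    apply ENNReal.toReal_le_of_le_ofReal (by positivity)
    calc ∫⁻ p in S, ENNReal.ofReal (f p) ≤ ∫⁻ p in S, ENNReal.ofReal (g p) :=
          setLIntegral_mono hg_meas fun p hp => ENNReal.ofReal_le_ofReal (hfg p hp)
      _ ≤ ENNReal.ofReal (1 / (ε * a)) := by
          rw [← lintegral_indicator hS, Measure.volume_eq_prod,
            lintegral_prod _ (hg_meas.indicator hS).aemeasurable]
          have inner_le : ∀ x : ℝ,
              (∫⁻ y, S.indicator (fun p => ENNReal.ofReal (g p)) (x, y)) ≤
                (Set.Ioo (0:ℝ) e).indicator (fun _ => ENNReal.ofReal (1 / a)) x := by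
            intro x
            by_cases hx : 0 < x ∧ x < e
            · set T : ℝ := e - x with hT_def
              have hT : 0 < T := by simp only [hT_def]; linarith [hx.2]
              have h2 : (0 : ℝ) < 1 + e - x := by linarith [hx.1, hx.2]
              have hC : (0 : ℝ) < (1 + e - x) ^ a := Real.rpow_pos_of_pos h2 _
              have hb : (-1 : ℝ) < (m : ℝ) - 5 / 2 := by linarith
              have hrw : ∀ y : ℝ, S.indicator (fun p => ENNReal.ofReal (g p)) (x, y) =
                  (Set.Ioo (0:ℝ) T).indicator (fun y => ENNReal.ofReal (g (x, y))) y := by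
                intro y
                simp only [Set.indicator_apply, hS_def, Set.mem_setOf_eq, Set.mem_Ioo, hx.1,
                  true_and, hT_def, lt_sub_iff_add_lt']
              rw [lintegral_congr hrw, lintegral_indicator measurableSet_Ioo,
                Set.indicator_of_mem (Set.mem_Ioo.mpr hx)]
              have hint : IntegrableOn (fun y : ℝ => y ^ ((m : ℝ) - 5 / 2) / (1 + e - x) ^ a)
                  (Set.Ioo 0 T) := by
                exact (((intervalIntegral.intervalIntegrable_rpow' hb).1).mono_set
                  Set.Ioo_subset_Ioc_self).div_const _
              have hnn : 0 ≤ᵐ[volume.restrict (Set.Ioo (0:ℝ) T)]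
                  fun y : ℝ => y ^ ((m : ℝ) - 5 / 2) / (1 + e - x) ^ a := by
                refine (ae_restrict_iff' measurableSet_Ioo).mpr
                  (Filter.Eventually.of_forall fun y hy => ?_)
                exact div_nonneg (Real.rpow_nonneg hy.1.le _) hC.le
              calc (∫⁻ y in Set.Ioo (0:ℝ) T, ENNReal.ofReal (g (x, y)))
                  = ENNReal.ofReal
                      (∫ y in Set.Ioo (0:ℝ) T, y ^ ((m : ℝ) - 5 / 2) / (1 + e - x) ^ a) :=
                    (ofReal_integral_eq_lintegral_ofReal hint hnn).symm
                _ ≤ ENNReal.ofReal (1 / a) := ?_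
              apply ENNReal.ofReal_le_ofReal
              have hval : (∫ y in Set.Ioo (0:ℝ) T, y ^ ((m : ℝ) - 5 / 2) / (1 + e - x) ^ a)
                  = T ^ a / a / (1 + e - x) ^ a := by
                rw [integral_div, ← integral_Ioc_eq_integral_Ioo,
                  ← intervalIntegral.integral_of_le hT.le,
                  integral_rpow (Or.inl hb)]
                have h1 : (m : ℝ) - 5 / 2 + 1 = a := by simp only [ha_def]; ring
                rw [h1, Real.zero_rpow (ne_of_gt ha0), sub_zero]
              rw [hval]
              have h3 : T ^ a ≤ (1 + e - x) ^ a :=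
                Real.rpow_le_rpow hT.le (by simp only [hT_def]; linarith) ha0.le
              rw [div_div, div_le_div_iff₀ (by positivity) ha0]
              nlinarith [Real.rpow_nonneg hT.le a]
            · have hz : ∀ y : ℝ, S.indicator (fun p => ENNReal.ofReal (g p)) (x, y) = 0 := by
                intro y
                refine Set.indicator_of_notMem ?_ _
                rintro ⟨h1, h2, h3⟩
                exact hx ⟨h1, by linarith⟩
              rw [lintegral_congr hz, lintegral_zero]
              exact zero_le
          calc (∫⁻ x, ∫⁻ y, S.indicator (fun p => ENNReal.ofReal (g p)) (x, y)) ≤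
                ∫⁻ x, (Set.Ioo (0:ℝ) e).indicator (fun _ => ENNReal.ofReal (1 / a)) x :=
                  lintegral_mono inner_le
            _ = ENNReal.ofReal (1 / a) * volume (Set.Ioo (0:ℝ) e) := by
                  rw [lintegral_indicator measurableSet_Ioo, setLIntegral_const]
            _ = ENNReal.ofReal (1 / (ε * a)) := by
                  rw [Real.volume_Ioo, ← ENNReal.ofReal_mul (by positivity)]
                  congr 1
                  rw [he_def]
                  field_simp
                  ring
  calc ε / (((m : ℝ) - 1 / 2) * a) * ∫ p in S, f p
      ≤ ε / (((m : ℝ) - 1 / 2) * a) * (1 / (ε * a)) := by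
        exact mul_le_mul_of_nonneg_left key (by positivity)
    _ = 1 / (((m : ℝ) - 1 / 2) * a ^ 2) := by
        rw [div_mul_div_comm, mul_one, div_eq_div_iff (by positivity) (by positivity)]
        ring
end

section
/- Let d ≥ 1, k ≥ 1 and m be integers with d + k ≥ 4 and 2m > k. Then ∫_{ℝ_+³} b^{2m−k} / ((a+b+1)^{m+d/2} (b+c+1)^{m+d/2}) da db dc = Γ(2m−k+1) Γ(d+k−3) / ((m+d/2−1)² Γ(2m+d−2)), where Γ is the Gamma function and the integral is over the open positive octant {(a,b,c) : a > 0, b > 0, c > 0}. -/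
open MeasureTheory Real

section Auxiliary

open Set Filter Topology

lemma shift_aux (c p : ℝ) (hc : 0 < c) (hp : 1 < p) :
    IntegrableOn (fun a : ℝ => (a + c) ^ (-p)) (Ioi 0) ∧
    ∫ a in Ioi (0:ℝ), (a + c) ^ (-p) = c ^ (1 - p) / (p - 1) := by
  set g : ℝ → ℝ := fun a => -(a + c) ^ (1 - p) / (p - 1) with hg
  have hderiv : ∀ x ∈ Ioi (0:ℝ), HasDerivAt g ((x + c) ^ (-p)) x := by
    intro x hx
    have hxc : (0:ℝ) < x + c := by have := hx.out; linarith
    have h1 : HasDerivAt (fun a : ℝ => (a + c) ^ (1 - p))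
        (1 * (1 - p) * (x + c) ^ (1 - p - 1)) x :=
      HasDerivAt.rpow_const ((hasDerivAt_id x).add_const c) (Or.inl hxc.ne')
    have h2 := (h1.neg).div_const (p - 1)
    refine HasDerivAt.congr_deriv h2 (Eq.symm ?_)
    have : 1 - p - 1 = -p := by ring
    rw [this]
    rw [eq_div_iff (by linarith : p - 1 ≠ 0)]
    ring
  have hpos : ∀ x ∈ Ioi (0:ℝ), 0 ≤ (x + c) ^ (-p) := by
    intro x hx
    have hxc : (0:ℝ) ≤ x + c := by have := hx.out; linarith
    positivity
  have htend : Tendsto g atTop (𝓝 0) := by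
    have h1 : Tendsto (fun a : ℝ => (a + c) ^ (1 - p)) atTop (𝓝 0) := by
      have := tendsto_rpow_neg_atTop (y := p - 1) (by linarith)
      have h2 : Tendsto (fun a : ℝ => a + c) atTop atTop :=
        tendsto_atTop_add_const_right _ c tendsto_id
      have h3 := this.comp h2
      simpa [Function.comp_def, show -(p-1) = 1 - p by ring] using h3
    have := (h1.neg).div_const (p - 1)
    simpa using this
  have hcont : ContinuousWithinAt g (Ici 0) 0 := by
    apply ContinuousAt.continuousWithinAt
    have : ContinuousAt (fun a : ℝ => (a + c) ^ (1 - p)) 0 := by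
      apply Real.continuousAt_rpow_const _ _ (Or.inl (by simpa using hc.ne'))
      |>.comp ((continuous_id.add continuous_const).continuousAt)
    exact (this.neg).div_const _
  constructor
  · exact integrableOn_Ioi_deriv_of_nonneg hcont hderiv hpos htend
  · rw [integral_Ioi_of_hasDerivAt_of_nonneg hcont hderiv hpos htend]
    simp only [hg]
    rw [zero_add, zero_sub, neg_div, neg_neg]

lemma beta_Ioo (u v : ℝ) (hu : 0 < u) (hv : 0 < v) :
    IntegrableOn (fun t : ℝ => t ^ (u - 1) * (1 - t) ^ (v - 1)) (Ioo 0 1) ∧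
    ∫ t in Ioo (0:ℝ) 1, t ^ (u - 1) * (1 - t) ^ (v - 1) =
      Gamma u * Gamma v / Gamma (u + v) := by
  have hC : IntervalIntegrable
      (fun x : ℝ => (x : ℂ) ^ ((u : ℂ) - 1) * (1 - (x : ℂ)) ^ ((v : ℂ) - 1)) volume 0 1 :=
    Complex.betaIntegral_convergent (by simpa using hu) (by simpa using hv)
  have hCIoo : IntegrableOn
      (fun x : ℝ => (x : ℂ) ^ ((u : ℂ) - 1) * (1 - (x : ℂ)) ^ ((v : ℂ) - 1)) (Ioo 0 1) :=
    ((intervalIntegrable_iff_integrableOn_Ioc_of_le (by norm_num)).1 hC).mono_set Ioo_subset_Ioc_self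
  have hcongr : ∀ x ∈ Ioo (0:ℝ) 1,
      (x : ℂ) ^ ((u : ℂ) - 1) * (1 - (x : ℂ)) ^ ((v : ℂ) - 1) =
      ((x ^ (u - 1) * (1 - x) ^ (v - 1) : ℝ) : ℂ) := by
    intro x hx
    rw [show ((u : ℂ) - 1) = ((u - 1 : ℝ) : ℂ) by push_cast; ring,
      show ((v : ℂ) - 1) = ((v - 1 : ℝ) : ℂ) by push_cast; ring,
      show (1 - (x : ℂ)) = ((1 - x : ℝ) : ℂ) by push_cast; ring,
      ← Complex.ofReal_cpow hx.1.le, ← Complex.ofReal_cpow (by linarith [hx.2]),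
      ← Complex.ofReal_mul]
  have hint : IntegrableOn (fun t : ℝ => t ^ (u - 1) * (1 - t) ^ (v - 1)) (Ioo 0 1) := by
    have h := (hCIoo.congr_fun hcongr measurableSet_Ioo).re
    refine IntegrableOn.congr_fun h (fun x _ => ?_) measurableSet_Ioo
    simp
  refine ⟨hint, ?_⟩
  -- complex beta integral equals ofReal of real integral
  have h1 : Complex.betaIntegral u v =
      ((∫ t in Ioo (0:ℝ) 1, t ^ (u - 1) * (1 - t) ^ (v - 1) : ℝ) : ℂ) := by
    rw [Complex.betaIntegral, intervalIntegral.integral_of_le (by norm_num : (0:ℝ) ≤ 1),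
      integral_Ioc_eq_integral_Ioo]
    rw [setIntegral_congr_fun measurableSet_Ioo hcongr]
    exact integral_ofReal
  have h2 := Complex.Gamma_mul_Gamma_eq_betaIntegral
    (s := (u:ℂ)) (t := (v:ℂ)) (by simpa using hu) (by simpa using hv)
  rw [h1, ← Complex.ofReal_add, Complex.Gamma_ofReal, Complex.Gamma_ofReal,
    Complex.Gamma_ofReal, ← Complex.ofReal_mul, ← Complex.ofReal_mul] at h2
  have h3 := Complex.ofReal_injective h2
  have hG : Gamma (u + v) ≠ 0 := (Gamma_pos_of_pos (by linarith)).ne'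
  field_simp [hG]
  linarith [h3]

lemma beta_Ioi (u v : ℝ) (hu : 0 < u) (hv : 0 < v) :
    IntegrableOn (fun x : ℝ => x ^ (u - 1) * (1 + x) ^ (-(u + v))) (Ioi 0) ∧
    ∫ x in Ioi (0:ℝ), x ^ (u - 1) * (1 + x) ^ (-(u + v)) =
      Gamma u * Gamma v / Gamma (u + v) := by
  set ψ : ℝ → ℝ := fun t => t / (1 - t) with hψ
  have himg : ψ '' Ioo 0 1 = Ioi 0 := by
    ext y
    constructor
    · rintro ⟨t, ⟨ht0, ht1⟩, rfl⟩
      exact div_pos ht0 (by linarith)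
    · intro hy
      have hy' : (0:ℝ) < y := hy
      have h1y : (0:ℝ) < 1 + y := by linarith
      refine ⟨y / (1 + y), ⟨div_pos hy' h1y, (div_lt_one h1y).2 (by linarith)⟩, ?_⟩
      simp only [hψ]
      rw [div_eq_iff]
      · field_simp; ring
      · intro h
        have : 1 - y / (1 + y) = 1 / (1 + y) := by field_simp; ring
        rw [this] at h
        exact (one_div_ne_zero h1y.ne') h
  have hderiv : ∀ t ∈ Ioo (0:ℝ) 1, HasDerivWithinAt ψ (((1 - t) ^ 2)⁻¹) (Ioo 0 1) t := by
    intro t ht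
    have h1t : (1:ℝ) - t ≠ 0 := by have := ht.2; intro h; linarith [sub_eq_zero.1 h]
    have : HasDerivAt ψ ((1 * (1 - t) - t * (0 - 1)) / (1 - t) ^ 2) t :=
      (hasDerivAt_id t).div ((hasDerivAt_const t 1).sub (hasDerivAt_id t)) h1t
    refine (this.congr_deriv ?_).hasDerivWithinAt
    field_simp
    ring
  have hinj : InjOn ψ (Ioo 0 1) := by
    intro a ha b hb h
    have h1a : (1:ℝ) - a ≠ 0 := by have := ha.2; intro hh; linarith [sub_eq_zero.1 hh]
    have h1b : (1:ℝ) - b ≠ 0 := by have := hb.2; intro hh; linarith [sub_eq_zero.1 hh]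
    simp only [hψ] at h
    rw [div_eq_div_iff h1a h1b] at h
    linarith [h]
  have key : ∀ t ∈ Ioo (0:ℝ) 1,
      |((1 - t) ^ 2)⁻¹| • ((ψ t) ^ (u - 1) * (1 + ψ t) ^ (-(u + v))) =
        t ^ (u - 1) * (1 - t) ^ (v - 1) := by
    intro t ht
    have ht0 : (0:ℝ) < t := ht.1
    have hs : (0:ℝ) < 1 - t := by linarith [ht.2]
    have h1 : 1 + ψ t = (1 - t)⁻¹ := by
      simp only [hψ]; field_simp; ring
    have h2 : (ψ t) ^ (u - 1) = t ^ (u - 1) * (1 - t) ^ (-(u - 1)) := by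
      simp only [hψ]
      rw [div_rpow ht0.le hs.le, Real.rpow_neg hs.le, div_eq_mul_inv]
    have h3 : (1 + ψ t) ^ (-(u + v)) = (1 - t) ^ (u + v) := by
      rw [h1, ← Real.rpow_neg_one (1 - t), ← Real.rpow_mul hs.le]
      norm_num
    rw [smul_eq_mul, abs_of_nonneg (by positivity), h2, h3,
      show ((1 - t) ^ 2)⁻¹ = (1 - t) ^ (-2:ℝ) from by
        rw [show ((1:ℝ) - t) ^ 2 = (1 - t) ^ ((2:ℕ):ℝ) from (Real.rpow_natCast _ 2).symm,
          ← Real.rpow_neg hs.le]; norm_num,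
      show (1 - t) ^ (-2:ℝ) * (t ^ (u - 1) * (1 - t) ^ (-(u - 1)) * (1 - t) ^ (u + v)) =
        t ^ (u - 1) * ((1 - t) ^ (-2:ℝ) * (1 - t) ^ (-(u - 1)) * (1 - t) ^ (u + v)) from by ring,
      ← Real.rpow_add hs, ← Real.rpow_add hs, show (-2:ℝ) + -(u - 1) + (u + v) = v - 1 by ring]
  constructor
  · rw [← himg, integrableOn_image_iff_integrableOn_abs_deriv_smul measurableSet_Ioo hderiv hinj]
    exact ((beta_Ioo u v hu hv).1).congr_fun (fun t ht => (key t ht).symm) measurableSet_Ioo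
  · rw [← himg, integral_image_eq_integral_abs_deriv_smul measurableSet_Ioo hderiv hinj,
      setIntegral_congr_fun measurableSet_Ioo key]
    exact (beta_Ioo u v hu hv).2

end Auxiliary

/-- For integers `d ≥ 1`, `k ≥ 1` with `d + k ≥ 4` and `2m > k`:
`∫_{ℝ₊³} b^(2m-k)/((a+b+1)^(m+d/2)(b+c+1)^(m+d/2)) da db dc
  = Γ(2m-k+1)Γ(d+k-3)/((m+d/2-1)² Γ(2m+d-2))`. -/
theorem statement12 (d k m : ℕ) (hd : 1 ≤ d) (hk : 1 ≤ k) (hdk : 4 ≤ d + k)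
    (hm : k < 2 * m) :
    (∫ p in {p : ℝ × ℝ × ℝ | 0 < p.1 ∧ 0 < p.2.1 ∧ 0 < p.2.2},
        p.2.1 ^ (2 * m - k) /
          ((p.1 + p.2.1 + 1) ^ ((m : ℝ) + (d : ℝ) / 2) *
            (p.2.1 + p.2.2 + 1) ^ ((m : ℝ) + (d : ℝ) / 2))) =
      Real.Gamma (2 * (m : ℝ) - (k : ℝ) + 1) * Real.Gamma ((d : ℝ) + (k : ℝ) - 3) /
        (((m : ℝ) + (d : ℝ) / 2 - 1) ^ 2 * Real.Gamma (2 * (m : ℝ) + (d : ℝ) - 2)) := by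
  -- notation
  set n : ℕ := 2 * m - k with hn
  set q : ℝ := (m : ℝ) + (d : ℝ) / 2 with hq
  have hdR : (1:ℝ) ≤ (d:ℝ) := by exact_mod_cast hd
  have hmR : (k:ℝ) < 2 * (m:ℝ) := by exact_mod_cast hm
  have hkR : (1:ℝ) ≤ (k:ℝ) := by exact_mod_cast hk
  have hdkR : (4:ℝ) ≤ (d:ℝ) + (k:ℝ) := by exact_mod_cast hdk
  have hm1 : 1 ≤ m := by omega
  have hq1 : 1 < q := by
    have : (1:ℝ) ≤ (m:ℝ) := by exact_mod_cast hm1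
    rw [hq]; linarith
  have hncast : ((n : ℕ) : ℝ) = 2 * (m:ℝ) - (k:ℝ) := by
    rw [hn]; push_cast [Nat.cast_sub hm.le]; ring
  set u : ℝ := 2 * (m:ℝ) - (k:ℝ) + 1 with hu'
  set v : ℝ := (d:ℝ) + (k:ℝ) - 3 with hv'
  have hu : 0 < u := by rw [hu']; linarith
  have hv : 0 < v := by rw [hv']; linarith
  have huv : u + v = 2 * q - 2 := by rw [hu', hv', hq]; ring
  have huv' : u + v = 2 * (m:ℝ) + (d:ℝ) - 2 := by rw [hu', hv']; ring
  set f : ℝ × ℝ × ℝ → ℝ := fun p =>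
    p.2.1 ^ n / ((p.1 + p.2.1 + 1) ^ q * (p.2.1 + p.2.2 + 1) ^ q) with hf
  set μ : Measure ℝ := volume.restrict (Set.Ioi 0) with hμ
  -- set equality
  have hset : {p : ℝ × ℝ × ℝ | 0 < p.1 ∧ 0 < p.2.1 ∧ 0 < p.2.2} =
      (Set.Ioi (0:ℝ)) ×ˢ ((Set.Ioi (0:ℝ)) ×ˢ (Set.Ioi (0:ℝ))) := by
    ext p; simp [Set.mem_prod]
  have hSmeas : MeasurableSet ((Set.Ioi (0:ℝ)) ×ˢ ((Set.Ioi (0:ℝ)) ×ˢ (Set.Ioi (0:ℝ)))) :=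
    measurableSet_Ioi.prod (measurableSet_Ioi.prod measurableSet_Ioi)
  -- measurability
  have hfm : Measurable f := by rw [hf]; fun_prop
  have hofm : Measurable fun p => ENNReal.ofReal (f p) :=
    ENNReal.measurable_ofReal.comp hfm
  -- nonnegativity a.e.
  have hae : 0 ≤ᵐ[volume.restrict ((Set.Ioi (0:ℝ)) ×ˢ ((Set.Ioi (0:ℝ)) ×ˢ (Set.Ioi (0:ℝ))))] f := by
    rw [Filter.EventuallyLE, ae_restrict_iff' hSmeas]
    filter_upwards with p hp
    obtain ⟨h1, h2, h3⟩ := hp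
    simp only [Pi.zero_apply, hf]
    have hb : (0:ℝ) < p.2.1 := h2
    have ha : (0:ℝ) < p.1 := h1
    have hc : (0:ℝ) < p.2.2 := h3
    apply div_nonneg (pow_nonneg hb.le n)
    exact mul_nonneg (Real.rpow_nonneg (by linarith) q) (Real.rpow_nonneg (by linarith) q)
  set C : ℝ → ℝ := fun b => (b + 1) ^ (1 - q) / (q - 1) with hC
  -- innermost c integral
  have step2 : ∀ a ∈ Set.Ioi (0:ℝ), ∀ b ∈ Set.Ioi (0:ℝ),
      (∫⁻ c, ENNReal.ofReal (f (a, b, c)) ∂μ)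
        = ENNReal.ofReal (b ^ n * (a + (b + 1)) ^ (-q) * C b) := by
    intro a ha b hb
    have ha' := Set.mem_Ioi.1 ha
    have hb' := Set.mem_Ioi.1 hb
    have hK : 0 ≤ b ^ n * (a + (b + 1)) ^ (-q) :=
      mul_nonneg (pow_nonneg hb'.le n) (Real.rpow_nonneg (by linarith) _)
    have heq : ∀ c ∈ Set.Ioi (0:ℝ), ENNReal.ofReal (f (a, b, c)) =
        ENNReal.ofReal (b ^ n * (a + (b + 1)) ^ (-q)) * ENNReal.ofReal ((c + (b + 1)) ^ (-q)) := by
      intro c hc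
      have hc' := Set.mem_Ioi.1 hc
      rw [← ENNReal.ofReal_mul hK]
      congr 1
      simp only [hf]
      rw [show a + b + 1 = a + (b + 1) by ring, show b + c + 1 = c + (b + 1) by ring,
        Real.rpow_neg (by linarith : (0:ℝ) ≤ a + (b + 1)),
        Real.rpow_neg (by linarith : (0:ℝ) ≤ c + (b + 1)),
        div_eq_mul_inv, mul_inv]
      ring
    rw [lintegral_congr_ae ((ae_restrict_iff' measurableSet_Ioi).2 (ae_of_all _ heq)),
      lintegral_const_mul' _ _ ENNReal.ofReal_ne_top,
      ← ofReal_integral_eq_lintegral_ofReal (shift_aux (b + 1) q (by linarith) hq1).1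
        ((ae_restrict_iff' measurableSet_Ioi).2 (ae_of_all _ fun c hc =>
          Real.rpow_nonneg (by have := Set.mem_Ioi.1 hc; linarith) _)),
      (shift_aux (b + 1) q (by linarith) hq1).2, ← ENNReal.ofReal_mul hK]
  -- iterate + swap
  have hGm : Measurable fun z : ℝ × ℝ =>
      ENNReal.ofReal (z.2 ^ n * (z.1 + (z.2 + 1)) ^ (-q) * C z.2) := by
    simp only [hC]; fun_prop
  have step1 : (∫⁻ p in (Set.Ioi (0:ℝ)) ×ˢ ((Set.Ioi (0:ℝ)) ×ˢ (Set.Ioi (0:ℝ))), ENNReal.ofReal (f p))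
      = ∫⁻ a, ∫⁻ b, ∫⁻ c, ENNReal.ofReal (f (a, b, c)) ∂μ ∂μ ∂μ := by
    rw [Measure.volume_eq_prod, ← Measure.prod_restrict,
      lintegral_prod _ hofm.aemeasurable]
    refine lintegral_congr fun a => ?_
    rw [Measure.volume_eq_prod, ← Measure.prod_restrict,
      lintegral_prod _ ((show Measurable fun y : ℝ × ℝ => ENNReal.ofReal (f (a, y)) from
        hofm.comp measurable_prodMk_left).aemeasurable)]
  have step3 : (∫⁻ a, ∫⁻ b, ∫⁻ c, ENNReal.ofReal (f (a, b, c)) ∂μ ∂μ ∂μ)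
      = ∫⁻ b, ∫⁻ a, ENNReal.ofReal (b ^ n * (a + (b + 1)) ^ (-q) * C b) ∂μ ∂μ := by
    rw [lintegral_congr_ae ((ae_restrict_iff' measurableSet_Ioi).2 (ae_of_all _ fun a ha =>
      lintegral_congr_ae ((ae_restrict_iff' measurableSet_Ioi).2 (ae_of_all _ fun b hb =>
        step2 a ha b hb))))]
    exact lintegral_lintegral_swap hGm.aemeasurable
  have step4 : ∀ b ∈ Set.Ioi (0:ℝ),
      (∫⁻ a, ENNReal.ofReal (b ^ n * (a + (b + 1)) ^ (-q) * C b) ∂μ)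
        = ENNReal.ofReal (b ^ n * C b * C b) := by
    intro b hb
    have hb' := Set.mem_Ioi.1 hb
    have hK : 0 ≤ b ^ n * C b := by
      apply mul_nonneg (pow_nonneg hb'.le n)
      rw [hC]
      exact div_nonneg (Real.rpow_nonneg (by linarith) _) (by linarith)
    have heq : ∀ a ∈ Set.Ioi (0:ℝ), ENNReal.ofReal (b ^ n * (a + (b + 1)) ^ (-q) * C b)
        = ENNReal.ofReal (b ^ n * C b) * ENNReal.ofReal ((a + (b + 1)) ^ (-q)) := by
      intro a ha
      rw [← ENNReal.ofReal_mul hK]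
      congr 1
      ring
    rw [lintegral_congr_ae ((ae_restrict_iff' measurableSet_Ioi).2 (ae_of_all _ heq)),
      lintegral_const_mul' _ _ ENNReal.ofReal_ne_top,
      ← ofReal_integral_eq_lintegral_ofReal (shift_aux (b + 1) q (by linarith) hq1).1
        ((ae_restrict_iff' measurableSet_Ioi).2 (ae_of_all _ fun c hc =>
          Real.rpow_nonneg (by have := Set.mem_Ioi.1 hc; linarith) _)),
      (shift_aux (b + 1) q (by linarith) hq1).2, ← ENNReal.ofReal_mul hK]
  have hcc : (0:ℝ) ≤ ((q - 1) ^ 2)⁻¹ := by positivity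
  have step5 : (∫⁻ b, ENNReal.ofReal (b ^ n * C b * C b) ∂μ)
      = ENNReal.ofReal (((q - 1) ^ 2)⁻¹ * (Gamma u * Gamma v / Gamma (u + v))) := by
    have heq : ∀ b ∈ Set.Ioi (0:ℝ), ENNReal.ofReal (b ^ n * C b * C b)
        = ENNReal.ofReal (((q - 1) ^ 2)⁻¹) *
          ENNReal.ofReal (b ^ (u - 1) * (1 + b) ^ (-(u + v))) := by
      intro b hb
      have hb' := Set.mem_Ioi.1 hb
      rw [← ENNReal.ofReal_mul hcc]
      congr 1
      simp only [hC]
      have hq0 : q - 1 ≠ 0 := by linarith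
      have e1 : (b:ℝ) ^ n = b ^ (u - 1) := by
        rw [← Real.rpow_natCast b n, hncast]
        congr 1
        rw [hu']; ring
      have e2 : ((b + 1):ℝ) ^ (1 - q) * (b + 1) ^ (1 - q) = (1 + b) ^ (-(u + v)) := by
        rw [← Real.rpow_add (by linarith : (0:ℝ) < b + 1),
          show (1:ℝ) - q + (1 - q) = -(u + v) by rw [huv]; ring, add_comm b 1]
      calc b ^ n * ((b + 1) ^ (1 - q) / (q - 1)) * ((b + 1) ^ (1 - q) / (q - 1))
          = b ^ n * ((b + 1) ^ (1 - q) * (b + 1) ^ (1 - q)) * ((q - 1) ^ 2)⁻¹ := by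
            field_simp
        _ = ((q - 1) ^ 2)⁻¹ * (b ^ (u - 1) * (1 + b) ^ (-(u + v))) := by rw [e1, e2]; ring
    rw [lintegral_congr_ae ((ae_restrict_iff' measurableSet_Ioi).2 (ae_of_all _ heq)),
      lintegral_const_mul' _ _ ENNReal.ofReal_ne_top,
      ← ofReal_integral_eq_lintegral_ofReal (beta_Ioi u v hu hv).1
        ((ae_restrict_iff' measurableSet_Ioi).2 (ae_of_all _ fun b hb =>
          mul_nonneg (Real.rpow_nonneg (le_of_lt (Set.mem_Ioi.1 hb)) _)
            (Real.rpow_nonneg (by have := Set.mem_Ioi.1 hb; linarith) _))),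
      (beta_Ioi u v hu hv).2, ← ENNReal.ofReal_mul hcc]
  have hGpos : 0 < Gamma (u + v) := Gamma_pos_of_pos (by linarith)
  have hR0 : 0 ≤ Gamma u * Gamma v / ((q - 1) ^ 2 * Gamma (u + v)) :=
    div_nonneg (mul_nonneg (Gamma_pos_of_pos hu).le (Gamma_pos_of_pos hv).le)
      (mul_nonneg (sq_nonneg _) hGpos.le)
  have key : (∫⁻ p in (Set.Ioi (0:ℝ)) ×ˢ ((Set.Ioi (0:ℝ)) ×ˢ (Set.Ioi (0:ℝ))), ENNReal.ofReal (f p))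
      = ENNReal.ofReal (Gamma u * Gamma v / ((q - 1) ^ 2 * Gamma (u + v))) := by
    rw [step1, step3,
      lintegral_congr_ae ((ae_restrict_iff' measurableSet_Ioi).2 (ae_of_all _ step4)),
      step5]
    have hne1 : q - 1 ≠ 0 := by linarith
    have hne2 : Gamma (u + v) ≠ 0 := hGpos.ne'
    congr 1
    field_simp
  rw [hset, integral_eq_lintegral_of_nonneg_ae hae hfm.aestronglyMeasurable, key,
    ENNReal.toReal_ofReal hR0, huv']
end

section
/- Let d ≥ 1 be an integer and k = (k_1,…,k_d) a multiindex of nonnegative integers with |k| = k_1+⋯+k_d ≥ 1. Then there exist constants 0 < c ≤ C and an integer M such that for all integers m ≥ M with 2m > |k|, c · m^{|k| + d/2 − 1} ≤ β_{2m−|k|,d} ≤ C · m^{|k| + d/2 − 1}. -/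
open Real

noncomputable section

/-- The constant `β_{2m-|k|,d}` from the paper: a sum over `d`-tuples
`(m_1,…,m_d)` with `m_1+⋯+m_d = m` and `2 m_j ≥ k_j`. -/
def betaConst (d : ℕ) (k : Fin d → ℕ) (m : ℕ) : ℝ :=
  ∑ v ∈ (Finset.Nat.antidiagonalTuple d m).filter (fun v => ∀ j, k j ≤ 2 * v j),
    (∏ j, ((2 * v j).factorial : ℝ)) ^ 2 /
      ((2 * π) ^ d * 2 ^ (2 * m) * (∏ j, ((2 * v j - k j).factorial : ℝ)) *
        (∏ j, ((v j).factorial : ℝ)) ^ 2)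

open Finset

def bterm (k n : ℕ) : ℝ :=
  (((2*n).factorial : ℝ))^2 / (((2*n - k).factorial : ℝ) * ((n.factorial : ℝ))^2)

lemma bterm_nonneg (k n : ℕ) : 0 ≤ bterm k n := by rw [bterm]; positivity

lemma cb_upper (n : ℕ) : (Nat.centralBinom n : ℝ) * Real.sqrt (2*n+1) ≤ 4 ^ n := by
  induction n with
  | zero => simp
  | succ n ih =>
    have key : (n+1 : ℝ) * Nat.centralBinom (n+1) = 2 * (2*n+1) * Nat.centralBinom n := by
      exact_mod_cast congrArg (Nat.cast (R := ℝ)) (Nat.succ_mul_centralBinom_succ n)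
    have h1 : Real.sqrt (2*n+1) * Real.sqrt (2*(n+1)+1) ≤ 2*n+2 := by
      rw [← Real.sqrt_mul (by positivity)]
      have : (2*(n:ℝ)+1) * (2*(n+1)+1) ≤ (2*n+2)^2 := by ring_nf; nlinarith
      calc Real.sqrt ((2*(n:ℝ)+1) * (2*(n+1)+1)) ≤ Real.sqrt ((2*n+2)^2) :=
            Real.sqrt_le_sqrt this
        _ = 2*n+2 := Real.sqrt_sq (by positivity)
    have hcb : (0:ℝ) < Nat.centralBinom n := by exact_mod_cast n.centralBinom_pos
    have hcb1 : (0:ℝ) ≤ Nat.centralBinom (n+1) := by positivity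
    -- (n+1) * (cb(n+1) * sqrt(2n+3)) = 2(2n+1) cb n sqrt(2n+3)
    have hs1 : (0:ℝ) ≤ Real.sqrt (2*n+1) := Real.sqrt_nonneg _
    have hs2 : (0:ℝ) ≤ Real.sqrt (2*(n+1)+1) := Real.sqrt_nonneg _
    have sq1 : Real.sqrt (2*(n:ℝ)+1) ^ 2 = 2*n+1 := Real.sq_sqrt (by positivity)
    have step : ((n:ℝ)+1) * ((Nat.centralBinom (n+1) : ℝ) * Real.sqrt (2*(n+1)+1))
        ≤ ((n:ℝ)+1) * 4^(n+1) := by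
      have e1 : ((n:ℝ)+1) * ((Nat.centralBinom (n+1) : ℝ) * Real.sqrt (2*(n+1)+1))
          = 2 * (2*n+1) * Nat.centralBinom n * Real.sqrt (2*(n+1)+1) := by
        rw [← mul_assoc, key]
      rw [e1]
      have e2 : 2 * (2*(n:ℝ)+1) * Nat.centralBinom n * Real.sqrt (2*(n+1)+1)
          = 2 * ((Nat.centralBinom n : ℝ) * Real.sqrt (2*n+1)) *
            (Real.sqrt (2*n+1) * Real.sqrt (2*(n+1)+1)) := by
        rw [show 2 * ((Nat.centralBinom n : ℝ) * Real.sqrt (2*n+1)) *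
            (Real.sqrt (2*n+1) * Real.sqrt (2*(n+1)+1)) =
            2 * (Real.sqrt (2*(n:ℝ)+1) ^ 2) * Nat.centralBinom n * Real.sqrt (2*(n+1)+1) by ring,
          sq1]
      rw [e2]
      calc 2 * ((Nat.centralBinom n : ℝ) * Real.sqrt (2*n+1)) *
            (Real.sqrt (2*n+1) * Real.sqrt (2*(n+1)+1))
          ≤ 2 * (4^n) * (2*n+2) := by
            apply mul_le_mul (by nlinarith [mul_nonneg hcb.le hs1]) h1 (by positivity) (by positivity)
        _ ≤ ((n:ℝ)+1) * 4^(n+1) := by ring_nf; nlinarith [pow_pos (show (0:ℝ) < 4 by norm_num) n]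
    have hn1 : (0:ℝ) < (n:ℝ)+1 := by positivity
    have := le_of_mul_le_mul_left step hn1
    push_cast at this ⊢
    convert this using 3 <;> push_cast <;> ring


lemma cb_lower (n : ℕ) (hn : 1 ≤ n) : (4:ℝ) ^ n ≤ 2 * (Nat.centralBinom n : ℝ) * Real.sqrt n := by
  induction n, hn using Nat.le_induction with
  | base => simp [Nat.centralBinom]; norm_num [Nat.centralBinom, Nat.choose]
  | succ n hn ih =>
    have key : (n+1 : ℝ) * Nat.centralBinom (n+1) = 2 * (2*n+1) * Nat.centralBinom n := by
      exact_mod_cast congrArg (Nat.cast (R := ℝ)) (Nat.succ_mul_centralBinom_succ n)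
    have hcb : (0:ℝ) < Nat.centralBinom n := by exact_mod_cast n.centralBinom_pos
    have hn1 : (0:ℝ) < (n:ℝ) := by exact_mod_cast hn
    have hs : (0:ℝ) < Real.sqrt n := Real.sqrt_pos.2 hn1
    have hs1 : (0:ℝ) < Real.sqrt ((n:ℝ)+1) := Real.sqrt_pos.2 (by positivity)
    have sqn : Real.sqrt (n:ℝ) ^ 2 = n := Real.sq_sqrt hn1.le
    have sqn1 : Real.sqrt ((n:ℝ)+1) ^ 2 = (n:ℝ)+1 := Real.sq_sqrt (by positivity)
    -- key inequality: 2(n+1)√n ≤ (2n+1)√(n+1), since 4n(n+1)^2 ≤ (2n+1)^2 (n+1)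
    have ineq : 2 * ((n:ℝ)+1) * Real.sqrt n ≤ (2*n+1) * Real.sqrt (n+1) := by
      nlinarith [sq_nonneg (Real.sqrt ((n:ℝ)+1) - Real.sqrt n), sq_nonneg ((2*(n:ℝ)+1) * Real.sqrt (n+1) - 2*(n+1)*Real.sqrt n), mul_pos hs hs1, sq_nonneg (Real.sqrt ((n:ℝ)+1) + Real.sqrt n)]
    -- goal * (n+1): 4^{n+1}(n+1) ≤ 2 cb(n+1) √(n+1) (n+1)
    have hmain : ((n:ℝ)+1) * (4:ℝ)^(n+1) ≤ ((n:ℝ)+1) * (2 * (Nat.centralBinom (n+1) : ℝ) * Real.sqrt ((n:ℝ)+1)) := by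
      have e1 : ((n:ℝ)+1) * (2 * (Nat.centralBinom (n+1) : ℝ) * Real.sqrt ((n:ℝ)+1))
          = 2 * (2 * (2*n+1) * Nat.centralBinom n) * Real.sqrt ((n:ℝ)+1) := by
        rw [show ((n:ℝ)+1) * (2 * (Nat.centralBinom (n+1) : ℝ) * Real.sqrt ((n:ℝ)+1)) = 2 * (((n:ℝ)+1) * (Nat.centralBinom (n+1) : ℝ)) * Real.sqrt ((n:ℝ)+1) by ring, key]
      rw [e1]
      calc ((n:ℝ)+1) * (4:ℝ)^(n+1)
          = 4 * ((n:ℝ)+1) * 4^n := by ring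
        _ ≤ 4 * ((n:ℝ)+1) * (2 * Nat.centralBinom n * Real.sqrt n) := by
            apply mul_le_mul_of_nonneg_left ih (by positivity)
        _ = 2 * (2 * Nat.centralBinom n) * (2 * ((n:ℝ)+1) * Real.sqrt n) := by ring
        _ ≤ 2 * (2 * Nat.centralBinom n) * ((2*n+1) * Real.sqrt (n+1)) := by
            apply mul_le_mul_of_nonneg_left ineq (by positivity)
        _ = 2 * (2 * (2*(n:ℝ)+1) * Nat.centralBinom n) * Real.sqrt ((n:ℝ)+1) := by ring
    have := le_of_mul_le_mul_left hmain (by positivity : (0:ℝ) < (n:ℝ)+1)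
    push_cast
    convert this using 2 <;> push_cast <;> ring


lemma rpow_half_bound {x y β : ℝ} (hx : 0 < x) (hxy : x ≤ y) (hyx : y ≤ 2*x)
    (hβ : -(1/2:ℝ) ≤ β) : x ^ β ≤ Real.sqrt 2 * y ^ β := by
  have hy : 0 < y := lt_of_lt_of_le hx hxy
  rcases le_or_gt 0 β with h | h
  · calc x ^ β ≤ y ^ β := Real.rpow_le_rpow hx.le hxy h
      _ ≤ Real.sqrt 2 * y ^ β := by
        nlinarith [Real.one_le_sqrt.2 (by norm_num : (1:ℝ) ≤ 2), Real.rpow_nonneg hy.le β]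
  · have e : x ^ β = y ^ β * (y/x) ^ (-β) := by
      rw [Real.div_rpow hy.le hx.le, Real.rpow_neg hy.le, Real.rpow_neg hx.le]
      field_simp
    rw [e]
    have h1 : (y/x) ^ (-β) ≤ (2:ℝ) ^ (-β) := by
      apply Real.rpow_le_rpow (by positivity) _ (by linarith)
      rw [div_le_iff₀ hx]; linarith
    have h2 : (2:ℝ) ^ (-β) ≤ (2:ℝ) ^ (1/2:ℝ) :=
      Real.rpow_le_rpow_of_exponent_le (by norm_num) (by linarith)
    have h3 : (2:ℝ) ^ (1/2:ℝ) = Real.sqrt 2 := (Real.sqrt_eq_rpow 2).symm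
    calc y ^ β * (y/x) ^ (-β) ≤ y ^ β * (2:ℝ) ^ (1/2:ℝ) := by
          apply mul_le_mul_of_nonneg_left (le_trans h1 h2) (Real.rpow_nonneg hy.le β)
      _ = Real.sqrt 2 * y ^ β := by rw [h3]; ring

lemma sum_inv_sqrt (m : ℕ) :
    ∑ a ∈ range (m+1), ((a:ℝ)+1) ^ (-(1/2):ℝ) ≤ 2 * ((m:ℝ)+1) ^ (1/2:ℝ) := by
  induction m with
  | zero =>
    simp only [Nat.cast_zero, zero_add, Finset.sum_range_one]
    rw [Real.one_rpow, Real.one_rpow]; norm_num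
  | succ m ih =>
    rw [Finset.sum_range_succ]
    have key : ((m:ℝ)+1+1) ^ (-(1/2):ℝ) ≤ 2 * ((m:ℝ)+1+1) ^ (1/2:ℝ) - 2 * ((m:ℝ)+1) ^ (1/2:ℝ) := by
      have h1 : ((m:ℝ)+1+1) ^ (-(1/2):ℝ) = (((m:ℝ)+1+1) ^ (1/2:ℝ))⁻¹ := by
        rw [Real.rpow_neg (by positivity)]
      have h2 : (((m:ℝ)+1) ^ (1/2:ℝ))^2 = (m:ℝ)+1 := by
        rw [← Real.rpow_natCast (((m:ℝ)+1) ^ (1/2:ℝ)) 2, ← Real.rpow_mul (by positivity)]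
        norm_num
      have h3 : (((m:ℝ)+1+1) ^ (1/2:ℝ))^2 = (m:ℝ)+1+1 := by
        rw [← Real.rpow_natCast (((m:ℝ)+1+1) ^ (1/2:ℝ)) 2, ← Real.rpow_mul (by positivity)]
        norm_num
      have p1 : (0:ℝ) < ((m:ℝ)+1) ^ (1/2:ℝ) := Real.rpow_pos_of_pos (by positivity) _
      have p2 : (0:ℝ) < ((m:ℝ)+1+1) ^ (1/2:ℝ) := Real.rpow_pos_of_pos (by positivity) _
      rw [h1, inv_le_iff_one_le_mul₀ p2]
      nlinarith [mul_pos p1 p2]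
    push_cast
    push_cast at ih key
    linarith

lemma sumPow {γ : ℝ} (hγ : -(1/2:ℝ) ≤ γ) (m : ℕ) :
    ∑ a ∈ range (m+1), ((a:ℝ)+1) ^ γ ≤ 2 * ((m:ℝ)+1) ^ (γ+1) := by
  have step : ∀ a ∈ range (m+1), ((a:ℝ)+1) ^ γ ≤ ((a:ℝ)+1) ^ (-(1/2):ℝ) * ((m:ℝ)+1) ^ (γ+1/2) := by
    intro a ha
    have ham : (a:ℝ) + 1 ≤ (m:ℝ) + 1 := by
      have := Finset.mem_range.1 ha
      have : (a:ℝ) ≤ m := by exact_mod_cast Nat.lt_succ_iff.1 this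
      linarith
    have e : ((a:ℝ)+1) ^ γ = ((a:ℝ)+1) ^ (-(1/2):ℝ) * ((a:ℝ)+1) ^ (γ+1/2) := by
      rw [← Real.rpow_add (by positivity)]; ring_nf
    rw [e]
    apply mul_le_mul_of_nonneg_left _ (Real.rpow_nonneg (by positivity) _)
    exact Real.rpow_le_rpow (by positivity) ham (by linarith)
  calc ∑ a ∈ range (m+1), ((a:ℝ)+1) ^ γ
      ≤ ∑ a ∈ range (m+1), ((a:ℝ)+1) ^ (-(1/2):ℝ) * ((m:ℝ)+1) ^ (γ+1/2) :=
        Finset.sum_le_sum step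
    _ = (∑ a ∈ range (m+1), ((a:ℝ)+1) ^ (-(1/2):ℝ)) * ((m:ℝ)+1) ^ (γ+1/2) := by
        rw [Finset.sum_mul]
    _ ≤ (2 * ((m:ℝ)+1) ^ (1/2:ℝ)) * ((m:ℝ)+1) ^ (γ+1/2) := by
        apply mul_le_mul_of_nonneg_right (sum_inv_sqrt m) (Real.rpow_nonneg (by positivity) _)
    _ = 2 * ((m:ℝ)+1) ^ (γ+1) := by
        rw [mul_assoc, ← Real.rpow_add (by positivity)]; ring_nf

lemma conv2 {α β : ℝ} (hα : -(1/2:ℝ) ≤ α) (hβ : -(1/2:ℝ) ≤ β) (m : ℕ) :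
    ∑ p ∈ Finset.HasAntidiagonal.antidiagonal m, ((p.1:ℝ)+1) ^ α * ((p.2:ℝ)+1) ^ β
      ≤ 6 * ((m:ℝ)+1) ^ (α+β+1) := by
  rw [Finset.Nat.sum_antidiagonal_eq_sum_range_succ_mk]
  have hterm : ∀ a ∈ range (m+1),
      ((a:ℝ)+1) ^ α * (((m-a : ℕ):ℝ)+1) ^ β
        ≤ Real.sqrt 2 * (((m:ℝ)+1) ^ β * ((a:ℝ)+1) ^ α)
          + Real.sqrt 2 * (((m:ℝ)+1) ^ α * (((m-a:ℕ):ℝ)+1) ^ β) := by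
    intro a ha
    have ham : a ≤ m := Nat.lt_succ_iff.1 (Finset.mem_range.1 ha)
    have hsum : ((a:ℕ):ℝ) + ((m - a : ℕ):ℝ) = (m:ℝ) := by
      push_cast [Nat.cast_sub ham]; ring
    have n1 : (0:ℝ) ≤ ((a:ℝ)+1) ^ α := Real.rpow_nonneg (by positivity) _
    have n2 : (0:ℝ) ≤ (((m-a:ℕ):ℝ)+1) ^ β := Real.rpow_nonneg (by positivity) _
    have n3 : (0:ℝ) ≤ ((m:ℝ)+1) ^ β := Real.rpow_nonneg (by positivity) _
    have n4 : (0:ℝ) ≤ ((m:ℝ)+1) ^ α := Real.rpow_nonneg (by positivity) _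
    have hs2 : (0:ℝ) ≤ Real.sqrt 2 := Real.sqrt_nonneg 2
    rcases le_or_gt (2*a) m with h | h
    · -- a small: m-a+1 ≥ (m+1)/2, use bound on the β factor
      have hb : (((m-a:ℕ):ℝ)+1) ^ β ≤ Real.sqrt 2 * ((m:ℝ)+1) ^ β := by
        apply rpow_half_bound (by positivity) _ _ hβ
        · linarith [hsum, (by positivity : (0:ℝ) ≤ (a:ℝ))]
        · have : (a:ℝ) ≤ ((m-a:ℕ):ℝ) := by
            have : (a:ℕ) ≤ m - a := by omega
            exact_mod_cast this
          linarith
      have : ((a:ℝ)+1) ^ α * (((m-a:ℕ):ℝ)+1) ^ β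
          ≤ Real.sqrt 2 * (((m:ℝ)+1) ^ β * ((a:ℝ)+1) ^ α) := by
        calc ((a:ℝ)+1) ^ α * (((m-a:ℕ):ℝ)+1) ^ β
            ≤ ((a:ℝ)+1) ^ α * (Real.sqrt 2 * ((m:ℝ)+1) ^ β) :=
              mul_le_mul_of_nonneg_left hb n1
          _ = Real.sqrt 2 * (((m:ℝ)+1) ^ β * ((a:ℝ)+1) ^ α) := by ring
      nlinarith [mul_nonneg n4 n2]
    · -- a large: a+1 ≥ (m+1)/2
      have hb : ((a:ℝ)+1) ^ α ≤ Real.sqrt 2 * ((m:ℝ)+1) ^ α := by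
        apply rpow_half_bound (by positivity) _ _ hα
        · have : (a:ℝ) ≤ (m:ℝ) := by exact_mod_cast ham
          linarith
        · have : (m:ℝ) ≤ 2*(a:ℝ) := by exact_mod_cast h.le
          linarith
      have : ((a:ℝ)+1) ^ α * (((m-a:ℕ):ℝ)+1) ^ β
          ≤ Real.sqrt 2 * (((m:ℝ)+1) ^ α * (((m-a:ℕ):ℝ)+1) ^ β) := by
        calc ((a:ℝ)+1) ^ α * (((m-a:ℕ):ℝ)+1) ^ β
            ≤ (Real.sqrt 2 * ((m:ℝ)+1) ^ α) * (((m-a:ℕ):ℝ)+1) ^ β :=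
              mul_le_mul_of_nonneg_right hb n2
          _ = Real.sqrt 2 * (((m:ℝ)+1) ^ α * (((m-a:ℕ):ℝ)+1) ^ β) := by ring
      nlinarith [mul_nonneg n3 n1]
  calc ∑ a ∈ range (m+1), ((a:ℝ)+1) ^ α * (((m-a:ℕ):ℝ)+1) ^ β
      ≤ ∑ a ∈ range (m+1), (Real.sqrt 2 * (((m:ℝ)+1) ^ β * ((a:ℝ)+1) ^ α)
          + Real.sqrt 2 * (((m:ℝ)+1) ^ α * (((m-a:ℕ):ℝ)+1) ^ β)) :=
        Finset.sum_le_sum hterm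
    _ = Real.sqrt 2 * ((m:ℝ)+1) ^ β * (∑ a ∈ range (m+1), ((a:ℝ)+1) ^ α)
        + Real.sqrt 2 * ((m:ℝ)+1) ^ α * (∑ a ∈ range (m+1), (((m-a:ℕ):ℝ)+1) ^ β) := by
        rw [Finset.sum_add_distrib, Finset.mul_sum, Finset.mul_sum]
        congr 1 <;> exact Finset.sum_congr rfl (fun a _ => by ring)
    _ ≤ Real.sqrt 2 * ((m:ℝ)+1) ^ β * (2 * ((m:ℝ)+1) ^ (α+1))
        + Real.sqrt 2 * ((m:ℝ)+1) ^ α * (2 * ((m:ℝ)+1) ^ (β+1)) := by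
        have hrefl : ∑ a ∈ range (m+1), (((m-a:ℕ):ℝ)+1) ^ β
            = ∑ a ∈ range (m+1), ((a:ℝ)+1) ^ β := by
          have := Finset.sum_range_reflect (fun a => ((a:ℝ)+1)^β) (m+1)
          simp only [Nat.add_sub_cancel] at this
          exact this
        apply add_le_add
        · apply mul_le_mul_of_nonneg_left (sumPow hα m)
          positivity
        · rw [hrefl]
          apply mul_le_mul_of_nonneg_left (sumPow hβ m)
          positivity
    _ ≤ 6 * ((m:ℝ)+1) ^ (α+β+1) := by
        have e1 : ((m:ℝ)+1) ^ β * ((m:ℝ)+1) ^ (α+1) = ((m:ℝ)+1) ^ (α+β+1) := by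
          rw [← Real.rpow_add (by positivity)]; ring_nf
        have e2 : ((m:ℝ)+1) ^ α * ((m:ℝ)+1) ^ (β+1) = ((m:ℝ)+1) ^ (α+β+1) := by
          rw [← Real.rpow_add (by positivity)]; ring_nf
        have hs : Real.sqrt 2 ≤ 3/2 := by
          rw [show (3/2:ℝ) = Real.sqrt ((3/2)^2) by rw [Real.sqrt_sq]; norm_num]
          apply Real.sqrt_le_sqrt; norm_num
        have hpow : (0:ℝ) ≤ ((m:ℝ)+1) ^ (α+β+1) := Real.rpow_nonneg (by positivity) _
        calc Real.sqrt 2 * ((m:ℝ)+1) ^ β * (2 * ((m:ℝ)+1) ^ (α+1))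
              + Real.sqrt 2 * ((m:ℝ)+1) ^ α * (2 * ((m:ℝ)+1) ^ (β+1))
            = 2 * Real.sqrt 2 * (((m:ℝ)+1) ^ β * ((m:ℝ)+1) ^ (α+1))
              + 2 * Real.sqrt 2 * (((m:ℝ)+1) ^ α * ((m:ℝ)+1) ^ (β+1)) := by ring
          _ = 4 * Real.sqrt 2 * ((m:ℝ)+1) ^ (α+β+1) := by rw [e1, e2]; ring
          _ ≤ 6 * ((m:ℝ)+1) ^ (α+β+1) := by nlinarith


lemma sum_aT_succ {d : ℕ} (m : ℕ) (F : (Fin (d+1) → ℕ) → ℝ) :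
    ∑ v ∈ Finset.Nat.antidiagonalTuple (d+1) m, F v
      = ∑ p ∈ Finset.HasAntidiagonal.antidiagonal m, ∑ w ∈ Finset.Nat.antidiagonalTuple d p.2,
          F (Fin.cons p.1 w) := by
  rw [Finset.sum_sigma']
  refine Finset.sum_nbij'
    (i := fun v => ⟨(v 0, ∑ j, Fin.tail v j), Fin.tail v⟩)
    (j := fun x => Fin.cons x.1.1 x.2) ?_ ?_ ?_ ?_ ?_
  · intro v hv
    rw [Finset.Nat.mem_antidiagonalTuple] at hv
    rw [Finset.mem_sigma]
    constructor
    · rw [Finset.HasAntidiagonal.mem_antidiagonal]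
      rw [← hv, Fin.sum_univ_succ]
      rfl
    · rw [Finset.Nat.mem_antidiagonalTuple]
  · intro x hx
    rw [Finset.mem_sigma] at hx
    obtain ⟨h1, h2⟩ := hx
    rw [Finset.HasAntidiagonal.mem_antidiagonal] at h1
    rw [Finset.Nat.mem_antidiagonalTuple] at h2 ⊢
    rw [Fin.sum_cons, h2, h1]
  · intro v _
    exact Fin.cons_self_tail v
  · intro x hx
    rw [Finset.mem_sigma] at hx
    rw [Finset.Nat.mem_antidiagonalTuple] at hx
    obtain ⟨h1, h2⟩ := hx
    rw [Finset.HasAntidiagonal.mem_antidiagonal] at h1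
    refine Sigma.ext ?_ ?_
    · simp only [Fin.cons_zero, Fin.tail_cons, h2]
    · simp only [Fin.tail_cons]
      exact heq_of_eq rfl
  · intro v _
    simp only [Fin.cons_self_tail]


lemma conv_tuple : ∀ d, 1 ≤ d → ∀ (e : Fin d → ℝ), (∀ j, -(1/2:ℝ) ≤ e j) → ∀ m : ℕ,
    ∑ v ∈ Finset.Nat.antidiagonalTuple d m, ∏ j, ((v j:ℝ)+1) ^ (e j)
      ≤ 6^d * ((m:ℝ)+1) ^ ((∑ j, e j) + d - 1) := by
  intro d hd
  induction d, hd using Nat.le_induction with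
  | base =>
    intro e he m
    have hset : Finset.Nat.antidiagonalTuple 1 m = {fun _ => m} := by
      ext v
      rw [Finset.Nat.mem_antidiagonalTuple, Fin.sum_univ_one, Finset.mem_singleton]
      constructor
      · intro h; funext j; rw [Subsingleton.elim j 0, h]
      · intro h; rw [h]
    rw [hset, Finset.sum_singleton, Fin.prod_univ_one, Fin.sum_univ_one]
    have h1 : ((m:ℝ)+1) ^ (e 0 + 1 - 1) = ((m:ℝ)+1) ^ (e 0) := by norm_num
    rw [pow_one, Nat.cast_one, h1]
    nlinarith [Real.rpow_nonneg (show (0:ℝ) ≤ (m:ℝ)+1 by positivity) (e 0)]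
  | succ d hd ih =>
    intro e he m
    set E : ℝ := ∑ j : Fin d, e j.succ with hE
    have hEd : -(1/2:ℝ) ≤ E + d - 1 := by
      have hlow : -(1/2:ℝ) * d ≤ E := by
        rw [hE]
        calc -(1/2:ℝ) * d = ∑ _j : Fin d, -(1/2:ℝ) := by
              rw [Finset.sum_const, Finset.card_univ, Fintype.card_fin]
              rw [nsmul_eq_mul]; ring
          _ ≤ E := Finset.sum_le_sum (fun j _ => he j.succ)
      have hd1 : (1:ℝ) ≤ d := by exact_mod_cast hd
      linarith
    rw [sum_aT_succ]
    have prod_eq : ∀ (a : ℕ) (w : Fin d → ℕ),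
        (∏ j : Fin (d+1), (((Fin.cons a w : Fin (d+1) → ℕ) j : ℝ)+1) ^ (e j))
          = ((a:ℝ)+1) ^ (e 0) * ∏ j : Fin d, ((w j:ℝ)+1) ^ (e j.succ) := by
      intro a w
      rw [Fin.prod_univ_succ]
      simp only [Fin.cons_succ, Fin.cons_zero]
    calc ∑ p ∈ Finset.HasAntidiagonal.antidiagonal m, ∑ w ∈ Finset.Nat.antidiagonalTuple d p.2,
          ∏ j : Fin (d+1), (((Fin.cons p.1 w : Fin (d+1) → ℕ) j : ℝ)+1) ^ (e j)
        = ∑ p ∈ Finset.HasAntidiagonal.antidiagonal m, ((p.1:ℝ)+1) ^ (e 0) *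
            ∑ w ∈ Finset.Nat.antidiagonalTuple d p.2,
              ∏ j : Fin d, ((w j:ℝ)+1) ^ (e j.succ) := by
          apply Finset.sum_congr rfl
          intro p _
          rw [Finset.mul_sum]
          exact Finset.sum_congr rfl (fun w _ => prod_eq p.1 w)
      _ ≤ ∑ p ∈ Finset.HasAntidiagonal.antidiagonal m, ((p.1:ℝ)+1) ^ (e 0) *
            (6^d * ((p.2:ℝ)+1) ^ (E + d - 1)) := by
          apply Finset.sum_le_sum
          intro p _
          apply mul_le_mul_of_nonneg_left (ih _ (fun j => he j.succ) p.2)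
          exact Real.rpow_nonneg (by positivity) _
      _ = 6^d * ∑ p ∈ Finset.HasAntidiagonal.antidiagonal m,
            ((p.1:ℝ)+1) ^ (e 0) * ((p.2:ℝ)+1) ^ (E + d - 1) := by
          rw [Finset.mul_sum]
          exact Finset.sum_congr rfl (fun p _ => by ring)
      _ ≤ 6^d * (6 * ((m:ℝ)+1) ^ (e 0 + (E + d - 1) + 1)) := by
          apply mul_le_mul_of_nonneg_left (conv2 (he 0) hEd m) (by positivity)
      _ ≤ 6^(d+1) * ((m:ℝ)+1) ^ ((∑ j : Fin (d+1), e j) + (d+1 : ℕ) - 1) := by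
          have hexp : e 0 + (E + d - 1) + 1 = (∑ j : Fin (d+1), e j) + ((d+1 : ℕ):ℝ) - 1 := by
            rw [Fin.sum_univ_succ, ← hE]
            push_cast
            ring
          rw [hexp, pow_succ]
          apply le_of_eq
          ring


lemma bterm_eq {k n : ℕ} (h : k ≤ 2*n) :
    bterm k n = (Nat.centralBinom n : ℝ) * ((2*n).descFactorial k : ℝ) := by
  have h1 : (2*n - k).factorial * (2*n).descFactorial k = (2*n).factorial :=
    Nat.factorial_mul_descFactorial h
  have h2 : Nat.centralBinom n * n.factorial * n.factorial = (2*n).factorial := by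
    have := Nat.choose_mul_factorial_mul_factorial (show n ≤ 2*n by omega)
    simpa [Nat.centralBinom, show 2*n - n = n by omega] using this
  have key : Nat.centralBinom n * (2*n).descFactorial k *
      ((2*n - k).factorial * (n.factorial)^2) = ((2*n).factorial)^2 := by
    calc Nat.centralBinom n * (2*n).descFactorial k * ((2*n - k).factorial * (n.factorial)^2)
        = (Nat.centralBinom n * n.factorial * n.factorial) *
          ((2*n - k).factorial * (2*n).descFactorial k) := by ring
      _ = ((2*n).factorial)^2 := by rw [h1, h2, sq]
  rw [bterm, div_eq_iff (by positivity), ← Nat.cast_pow, ← key]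
  push_cast
  ring



lemma bterm_upper {k n : ℕ} (h : k ≤ 2*n) :
    bterm k n ≤ 2^k * 4^n * ((n:ℝ)+1) ^ ((k:ℝ) - 1/2) := by
  rw [bterm_eq h]
  set x : ℝ := (n:ℝ) + 1 with hx
  have hx0 : (0:ℝ) < x := by positivity
  have hsx : (0:ℝ) < Real.sqrt x := Real.sqrt_pos.2 hx0
  have hcb : (Nat.centralBinom n : ℝ) ≤ 4^n / Real.sqrt x := by
    rw [le_div_iff₀ hsx]
    calc (Nat.centralBinom n : ℝ) * Real.sqrt x ≤ (Nat.centralBinom n : ℝ) * Real.sqrt (2*n+1) := by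
          apply mul_le_mul_of_nonneg_left (Real.sqrt_le_sqrt (by rw [hx]; push_cast; linarith [Nat.cast_nonneg (α := ℝ) n])) (by positivity)
      _ ≤ 4^n := cb_upper n
  have hdesc : ((2*n).descFactorial k : ℝ) ≤ 2^k * x^k := by
    calc ((2*n).descFactorial k : ℝ) ≤ ((2*n)^k : ℕ) := by
          exact_mod_cast Nat.descFactorial_le_pow (2*n) k
      _ = ((2*n : ℕ):ℝ)^k := by push_cast; ring
      _ ≤ (2*x)^k := by
          apply pow_le_pow_left₀ (by positivity) _ k
          rw [hx]; push_cast; linarith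
      _ = 2^k * x^k := mul_pow 2 x k
  have hrpow : x ^ ((k:ℝ) - 1/2) = x^k / Real.sqrt x := by
    rw [Real.rpow_sub hx0, Real.rpow_natCast, Real.sqrt_eq_rpow]
  rw [hrpow]
  calc (Nat.centralBinom n : ℝ) * ((2*n).descFactorial k : ℝ)
      ≤ (4^n / Real.sqrt x) * (2^k * x^k) := by
        apply mul_le_mul hcb hdesc (by positivity) (by positivity)
    _ = 2^k * 4^n * (x^k / Real.sqrt x) := by ring



lemma bterm_lower {k n : ℕ} (hn : 1 ≤ n) (hkn : k ≤ n) :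
    (1/2) * 4^n * (n:ℝ) ^ ((k:ℝ) - 1/2) ≤ bterm k n := by
  rw [bterm_eq (by omega)]
  have hn0 : (0:ℝ) < (n:ℝ) := by exact_mod_cast hn
  have hsn : (0:ℝ) < Real.sqrt n := Real.sqrt_pos.2 hn0
  have hcb : 4^n / (2 * Real.sqrt n) ≤ (Nat.centralBinom n : ℝ) := by
    rw [div_le_iff₀ (by positivity)]
    calc (4:ℝ)^n ≤ 2 * (Nat.centralBinom n : ℝ) * Real.sqrt n := cb_lower n hn
      _ = (Nat.centralBinom n : ℝ) * (2 * Real.sqrt n) := by ring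
  have hdesc : (n:ℝ)^k ≤ ((2*n).descFactorial k : ℝ) := by
    calc (n:ℝ)^k = ((n^k : ℕ) : ℝ) := by push_cast; ring
      _ ≤ (((2*n + 1 - k)^k : ℕ) : ℝ) := by
          exact_mod_cast Nat.pow_le_pow_left (by omega) k
      _ ≤ ((2*n).descFactorial k : ℝ) := by exact_mod_cast Nat.pow_sub_le_descFactorial (2*n) k
  have hrpow : (n:ℝ) ^ ((k:ℝ) - 1/2) = (n:ℝ)^k / Real.sqrt n := by
    rw [Real.rpow_sub hn0, Real.rpow_natCast, Real.sqrt_eq_rpow]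
  rw [hrpow]
  calc (1/2) * 4^n * ((n:ℝ)^k / Real.sqrt n) = (4^n / (2 * Real.sqrt n)) * (n:ℝ)^k := by ring
    _ ≤ (Nat.centralBinom n : ℝ) * ((2*n).descFactorial k : ℝ) := by
        apply mul_le_mul hcb hdesc (by positivity) (Nat.cast_nonneg _)


lemma beta_eq (d : ℕ) (k : Fin d → ℕ) (m : ℕ) :
    betaConst d k m = ((2*π)^d * 2^(2*m))⁻¹ *
      ∑ v ∈ (Finset.Nat.antidiagonalTuple d m).filter (fun v => ∀ j, k j ≤ 2 * v j),
        ∏ j, bterm (k j) (v j) := by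
  rw [betaConst, Finset.mul_sum]
  apply Finset.sum_congr rfl
  intro v _
  have e1 : ∏ j, bterm (k j) (v j)
      = (∏ j, ((2 * v j).factorial : ℝ))^2 /
        ((∏ j, ((2 * v j - k j).factorial : ℝ)) * (∏ j, ((v j).factorial : ℝ))^2) := by
    simp_rw [bterm, ← Finset.prod_pow]
    rw [← Finset.prod_mul_distrib, ← Finset.prod_div_distrib]
  rw [e1, div_eq_mul_inv, div_eq_mul_inv, mul_inv, mul_inv ((2*π)^d * 2^(2*m))]
  ring


lemma rpow_coord {v m A k : ℝ} (hv : 0 < v) (hvm : v ≤ m) (hA : 0 < A)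
    (hAv : m ≤ A * v) (hk : 0 ≤ k) :
    A^(-k) * m^(k - 1/2) ≤ v^(k - 1/2) := by
  have hm0 : 0 < m := lt_of_lt_of_le hv hvm
  set r : ℝ := v / m with hr
  have hr0 : 0 < r := by rw [hr]; positivity
  have hr1 : r ≤ 1 := by rw [hr, div_le_one hm0]; exact hvm
  have hrA : A⁻¹ ≤ r := by
    rw [hr, inv_le_iff_one_le_mul₀ hA, div_mul_eq_mul_div, le_div_iff₀ hm0, one_mul, mul_comm]
    exact hAv
  have hveq : v = m * r := by rw [hr]; field_simp
  have e1 : v ^ (k - 1/2) = m ^ (k - 1/2) * r ^ (k - 1/2) := by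
    rw [hveq, Real.mul_rpow hm0.le hr0.le]
  have e2 : r ^ k ≤ r ^ (k - 1/2) :=
    Real.rpow_le_rpow_of_exponent_ge hr0 hr1 (by linarith)
  have e3 : A ^ (-k) ≤ r ^ k := by
    calc A ^ (-k) = (A⁻¹) ^ k := by
          rw [Real.inv_rpow hA.le, Real.rpow_neg hA.le]
      _ ≤ r ^ k := Real.rpow_le_rpow (by positivity) hrA hk
  rw [e1]
  calc A^(-k) * m^(k-1/2) = m^(k-1/2) * A^(-k) := by ring
    _ ≤ m^(k-1/2) * r^(k-1/2) := by
        apply mul_le_mul_of_nonneg_left (le_trans e3 e2) (Real.rpow_nonneg hm0.le _)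



lemma beta_lower (d : ℕ) (hd : 1 ≤ d) (k : Fin d → ℕ) (hk : 1 ≤ ∑ j, k j) :
    ∃ c : ℝ, 0 < c ∧ ∃ M : ℕ, 1 ≤ M ∧ ∀ m : ℕ, M ≤ m →
      c * (m:ℝ) ^ (((∑ j, k j : ℕ):ℝ) + (d:ℝ)/2 - 1) ≤ betaConst d k m := by
  obtain ⟨eD, rfl⟩ : ∃ eD, d = eD + 1 := ⟨d - 1, by omega⟩
  set K : ℕ := ∑ j, k j with hK
  refine ⟨((2*π)^(eD+1))⁻¹ * (1/2)^(eD+1) * (4*((eD+1):ℝ))^(-(K:ℝ)) / (4*((eD+1):ℝ))^eD, by positivity,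
    2*(eD+1)*(K+2) + 4*(eD+1), by omega, ?_⟩
  intro m hm
  set s : ℕ := m / (2*(eD+1)) with hs
  have hd2 : 0 < 2*(eD+1) := by omega
  have hsK : K + 1 ≤ s := by
    rw [hs, Nat.le_div_iff_mul_le hd2]
    calc (K+1) * (2*(eD+1)) ≤ (K+2) * (2*(eD+1)) := Nat.mul_le_mul_right _ (by omega)
      _ = 2*(eD+1)*(K+2) := by ring
      _ ≤ m := by omega
  have hs1 : 1 ≤ s := by omega
  have h2ds : 2*(eD+1)*s ≤ m := by
    rw [hs, mul_comm]
    exact Nat.div_mul_le_self m (2*(eD+1))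
  have hm4ds : m ≤ 4*(eD+1)*s := by
    have h1 : 2*(eD+1)*s + m % (2*(eD+1)) = m := by rw [hs]; exact Nat.div_add_mod m (2*(eD+1))
    have h2 : m % (2*(eD+1)) < 2*(eD+1) := Nat.mod_lt m hd2
    have h3 : 2*(eD+1) ≤ 2*(eD+1)*s := Nat.le_mul_of_pos_right _ (by omega)
    have h4 : 4*(eD+1)*s = 2*(eD+1)*s + 2*(eD+1)*s := by ring
    omega
  have hkj : ∀ j, k j ≤ K := by
    intro j
    exact Finset.single_le_sum (f := k) (fun i _ => Nat.zero_le _) (Finset.mem_univ j)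
  have hm1 : 1 ≤ m := by omega
  have hm0 : (0:ℝ) < m := by exact_mod_cast hm1
  -- the injection
  set T : Finset (Fin eD → ℕ) := Fintype.piFinset (fun _ : Fin eD => Finset.range s) with hT
  set φ : (Fin eD → ℕ) → (Fin (eD+1) → ℕ) :=
    fun t => Fin.cons (m - ∑ j, (s + t j)) (fun j => s + t j) with hφ
  have hsum_le : ∀ t ∈ T, (∑ j, (s + t j)) + 2*s ≤ m := by
    intro t ht
    rw [hT, Fintype.mem_piFinset] at ht
    have : ∑ j, (s + t j) ≤ ∑ _j : Fin eD, 2*s := by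
      apply Finset.sum_le_sum
      intro j _
      have := Finset.mem_range.1 (ht j)
      omega
    rw [Finset.sum_const, Finset.card_univ, Fintype.card_fin, smul_eq_mul] at this
    have h3 : eD * (2*s) + 2*s = 2*(eD+1)*s := by ring
    omega
  have hφ_sum : ∀ t ∈ T, ∑ j, φ t j = m := by
    intro t ht
    rw [hφ]
    simp only [Fin.sum_cons]
    have := hsum_le t ht
    omega
  have hφ_coord_lb : ∀ t ∈ T, ∀ j, s ≤ φ t j := by
    intro t ht j
    have hsl := hsum_le t ht
    refine Fin.cases ?_ ?_ j
    · simp only [hφ, Fin.cons_zero]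
      omega
    · intro i
      simp only [hφ, Fin.cons_succ]
      omega
  have hφ_coord_ub : ∀ t ∈ T, ∀ j, φ t j ≤ m := by
    intro t ht j
    rw [← hφ_sum t ht]
    exact Finset.single_le_sum (fun i _ => Nat.zero_le _) (Finset.mem_univ j)
  have hφ_mem : ∀ t ∈ T, φ t ∈ (Finset.Nat.antidiagonalTuple (eD+1) m).filter
      (fun v => ∀ j, k j ≤ 2 * v j) := by
    intro t ht
    rw [Finset.mem_filter, Finset.Nat.mem_antidiagonalTuple]
    refine ⟨hφ_sum t ht, fun j => ?_⟩
    have h1 := hφ_coord_lb t ht j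
    have h2 := hkj j
    omega
  have hφ_inj : Set.InjOn φ T := by
    intro t1 _ t2 _ h12
    funext j
    have := congrFun h12 j.succ
    simp only [hφ, Fin.cons_succ] at this
    omega
  -- per-term lower bound
  have hterm : ∀ t ∈ T, ((1/2:ℝ))^(eD+1) * 4^m * (4*((eD+1):ℝ))^(-(K:ℝ)) * (m:ℝ)^((K:ℝ) - (eD+1)/2)
      ≤ ∏ j, bterm (k j) (φ t j) := by
    intro t ht
    have step1 : ∀ j, (1/2:ℝ) * 4^(φ t j) * (4*((eD+1):ℝ))^(-(k j:ℝ)) * (m:ℝ)^((k j:ℝ) - 1/2)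
        ≤ bterm (k j) (φ t j) := by
      intro j
      have hlb := hφ_coord_lb t ht j
      have hub := hφ_coord_ub t ht j
      have hv1 : 1 ≤ φ t j := le_trans hs1 hlb
      have hkv : k j ≤ φ t j := by have := hkj j; omega
      have hb := bterm_lower hv1 hkv
      have hc : (4*((eD+1):ℝ))^(-(k j:ℝ)) * (m:ℝ)^((k j:ℝ) - 1/2) ≤ (φ t j : ℝ)^((k j:ℝ) - 1/2) := by
        apply rpow_coord (by exact_mod_cast hv1) (by exact_mod_cast hub) (by positivity) _
          (Nat.cast_nonneg _)
        -- m ≤ 4*(eD+1)*(φ t j)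
        have : m ≤ 4*(eD+1)*(φ t j) := le_trans hm4ds (by
          apply Nat.mul_le_mul_left _ hlb)
        exact_mod_cast this
      calc (1/2:ℝ) * 4^(φ t j) * (4*((eD+1):ℝ))^(-(k j:ℝ)) * (m:ℝ)^((k j:ℝ) - 1/2)
          = (1/2) * 4^(φ t j) * ((4*((eD+1):ℝ))^(-(k j:ℝ)) * (m:ℝ)^((k j:ℝ) - 1/2)) := by ring
        _ ≤ (1/2) * 4^(φ t j) * ((φ t j : ℝ)^((k j:ℝ) - 1/2)) := by
            apply mul_le_mul_of_nonneg_left hc (by positivity)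
        _ ≤ bterm (k j) (φ t j) := hb
    calc ((1/2:ℝ))^(eD+1) * 4^m * (4*((eD+1):ℝ))^(-(K:ℝ)) * (m:ℝ)^((K:ℝ) - (eD+1)/2)
        = ∏ j : Fin (eD+1), ((1/2:ℝ) * 4^(φ t j) * (4*((eD+1):ℝ))^(-(k j:ℝ)) * (m:ℝ)^((k j:ℝ) - 1/2)) := by
          have eA : ∑ j : Fin (eD+1), -((k j : ℕ):ℝ) = -(K:ℝ) := by
            rw [Finset.sum_neg_distrib, neg_inj, hK]
            push_cast
            ring
          have eB : ∑ j : Fin (eD+1), (((k j : ℕ):ℝ) - 1/2) = (K:ℝ) - ((eD+1):ℝ)/2 := by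
            rw [Finset.sum_sub_distrib, Finset.sum_const, Finset.card_univ, Fintype.card_fin,
              nsmul_eq_mul, hK]
            push_cast
            ring
          rw [Finset.prod_mul_distrib, Finset.prod_mul_distrib, Finset.prod_mul_distrib]
          rw [Finset.prod_const, Finset.card_univ, Fintype.card_fin]
          rw [Finset.prod_pow_eq_pow_sum, hφ_sum t ht]
          rw [← Real.rpow_sum_of_pos (by positivity : (0:ℝ) < 4*((eD+1):ℝ)) _ _]
          rw [← Real.rpow_sum_of_pos hm0 _ _]
          rw [eA, eB]
      _ ≤ ∏ j, bterm (k j) (φ t j) := by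
          apply Finset.prod_le_prod
          · intro j _
            positivity
          · intro j _
            exact step1 j
    
  -- sum over the image
  have hsum_lower : (s:ℝ)^eD * (((1/2:ℝ))^(eD+1) * 4^m * (4*((eD+1):ℝ))^(-(K:ℝ)) * (m:ℝ)^((K:ℝ) - (eD+1)/2))
      ≤ ∑ v ∈ (Finset.Nat.antidiagonalTuple (eD+1) m).filter (fun v => ∀ j, k j ≤ 2 * v j),
        ∏ j, bterm (k j) (v j) := by
    have himg : ∑ v ∈ T.image φ, ∏ j, bterm (k j) (v j)
        = ∑ t ∈ T, ∏ j, bterm (k j) (φ t j) := Finset.sum_image (fun a ha b hb => hφ_inj ha hb)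
    have hsub : T.image φ ⊆ (Finset.Nat.antidiagonalTuple (eD+1) m).filter
        (fun v => ∀ j, k j ≤ 2 * v j) := by
      intro v hv
      rw [Finset.mem_image] at hv
      obtain ⟨t, ht, rfl⟩ := hv
      exact hφ_mem t ht
    calc (s:ℝ)^eD * (((1/2:ℝ))^(eD+1) * 4^m * (4*((eD+1):ℝ))^(-(K:ℝ)) * (m:ℝ)^((K:ℝ) - (eD+1)/2))
        = ∑ _t ∈ T, (((1/2:ℝ))^(eD+1) * 4^m * (4*((eD+1):ℝ))^(-(K:ℝ)) * (m:ℝ)^((K:ℝ) - (eD+1)/2)) := by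
          rw [Finset.sum_const, hT, Fintype.card_piFinset]
          simp only [Finset.card_range, Finset.prod_const, Finset.card_univ, Fintype.card_fin]
          rw [nsmul_eq_mul]
          push_cast
          ring
      _ ≤ ∑ t ∈ T, ∏ j, bterm (k j) (φ t j) := Finset.sum_le_sum hterm
      _ = ∑ v ∈ T.image φ, ∏ j, bterm (k j) (v j) := himg.symm
      _ ≤ ∑ v ∈ (Finset.Nat.antidiagonalTuple (eD+1) m).filter (fun v => ∀ j, k j ≤ 2 * v j),
          ∏ j, bterm (k j) (v j) := by
          apply Finset.sum_le_sum_of_subset_of_nonneg hsub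
          intro v _ _
          exact Finset.prod_nonneg (fun j _ => bterm_nonneg _ _)
  -- conclude
  have hpow2 : ((2:ℝ)^(2*m) : ℝ) = 4^m := by rw [pow_mul]; norm_num
  have hsreal : (m:ℝ) / (4*((eD+1):ℝ)) ≤ (s:ℝ) := by
    rw [div_le_iff₀ (by positivity)]
    calc (m:ℝ) ≤ ((4*(eD+1)*s : ℕ) : ℝ) := by exact_mod_cast hm4ds
      _ = (s:ℝ) * (4*((eD+1):ℝ)) := by push_cast; ring
  rw [beta_eq, hpow2, Nat.cast_add, Nat.cast_one]
  have key : ((2*π)^(eD+1) * 4^m)⁻¹ *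
      ((s:ℝ)^eD * (((1/2:ℝ))^(eD+1) * 4^m * (4*((eD+1):ℝ))^(-(K:ℝ)) * (m:ℝ)^((K:ℝ) - (eD+1)/2)))
      ≥ ((2*π)^(eD+1))⁻¹ * (1/2)^(eD+1) * (4*((eD+1):ℝ))^(-(K:ℝ)) / (4*((eD+1):ℝ))^eD *
        (m:ℝ) ^ ((K:ℝ) + ((eD+1):ℝ)/2 - 1) := by
    have hsp : ((m:ℝ) / (4*((eD+1):ℝ)))^eD ≤ (s:ℝ)^eD :=
      pow_le_pow_left₀ (by positivity) hsreal eD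
    have hrpow_split : (m:ℝ) ^ ((K:ℝ) + ((eD+1):ℝ)/2 - 1)
        = (m:ℝ)^eD * (m:ℝ)^((K:ℝ) - (eD+1)/2) := by
      rw [← Real.rpow_natCast (m:ℝ) eD, ← Real.rpow_add hm0]
      congr 1
      push_cast
      ring
    have expand : ((m:ℝ) / (4*((eD+1):ℝ)))^eD = (m:ℝ)^eD / (4*((eD+1):ℝ))^eD := div_pow _ _ _
    have h4m : (0:ℝ) < 4^m := by positivity
    have hrp1 : (0:ℝ) < (4*((eD+1):ℝ))^(-(K:ℝ)) := Real.rpow_pos_of_pos (by positivity) _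
    have hrp2 : (0:ℝ) < (m:ℝ)^((K:ℝ) - (eD+1)/2) := Real.rpow_pos_of_pos hm0 _
    rw [ge_iff_le, hrpow_split]
    calc ((2*π)^(eD+1))⁻¹ * (1/2)^(eD+1) * (4*((eD+1):ℝ))^(-(K:ℝ)) / (4*((eD+1):ℝ))^eD *
          ((m:ℝ)^eD * (m:ℝ)^((K:ℝ) - (eD+1)/2))
        = ((m:ℝ)^eD / (4*((eD+1):ℝ))^eD) *
          (((2*π)^(eD+1))⁻¹ * ((1/2)^(eD+1) * (4*((eD+1):ℝ))^(-(K:ℝ)) * (m:ℝ)^((K:ℝ) - (eD+1)/2))) := by ring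
      _ ≤ (s:ℝ)^eD *
          (((2*π)^(eD+1))⁻¹ * ((1/2)^(eD+1) * (4*((eD+1):ℝ))^(-(K:ℝ)) * (m:ℝ)^((K:ℝ) - (eD+1)/2))) := by
          apply mul_le_mul_of_nonneg_right (by rw [← expand]; exact hsp) (by positivity)
      _ = ((2*π)^(eD+1) * 4^m)⁻¹ *
          ((s:ℝ)^eD * (((1/2:ℝ))^(eD+1) * 4^m * (4*((eD+1):ℝ))^(-(K:ℝ)) * (m:ℝ)^((K:ℝ) - (eD+1)/2))) := by
          rw [mul_inv]
          field_simp
  calc ((2*π)^(eD+1))⁻¹ * (1/2)^(eD+1) * (4*((eD+1):ℝ))^(-(K:ℝ)) / (4*((eD+1):ℝ))^eD *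
        (m:ℝ) ^ ((K:ℝ) + ((eD+1):ℝ)/2 - 1)
      ≤ ((2*π)^(eD+1) * 4^m)⁻¹ *
        ((s:ℝ)^eD * (((1/2:ℝ))^(eD+1) * 4^m * (4*((eD+1):ℝ))^(-(K:ℝ)) * (m:ℝ)^((K:ℝ) - (eD+1)/2))) := key
    _ ≤ ((2*π)^(eD+1) * 4^m)⁻¹ * ∑ v ∈ (Finset.Nat.antidiagonalTuple (eD+1) m).filter
          (fun v => ∀ j, k j ≤ 2 * v j), ∏ j, bterm (k j) (v j) := by
        apply mul_le_mul_of_nonneg_left hsum_lower (by positivity)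

lemma beta_upper (d : ℕ) (hd : 1 ≤ d) (k : Fin d → ℕ) (hk : 1 ≤ ∑ j, k j)
    (m : ℕ) (hm : 1 ≤ m) :
    betaConst d k m ≤ (((2*π)^d)⁻¹ * 2^(∑ j, k j) * 6^d * (2:ℝ)^(((∑ j, k j : ℕ):ℝ)+d))
      * (m:ℝ) ^ (((∑ j, k j : ℕ):ℝ) + (d:ℝ)/2 - 1) := by
  set K : ℕ := ∑ j, k j with hK
  set E : ℝ := ((K:ℕ):ℝ) + (d:ℝ)/2 - 1 with hEdef
  set e : Fin d → ℝ := fun j => (k j : ℝ) - 1/2 with he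
  have he2 : ∀ j, -(1/2:ℝ) ≤ e j := by
    intro j; rw [he]; simp only []
    have : (0:ℝ) ≤ (k j : ℝ) := Nat.cast_nonneg _
    linarith
  have hsume : (∑ j, e j) + d - 1 = E := by
    rw [he, hEdef, Finset.sum_sub_distrib, Finset.sum_const, Finset.card_univ,
      Fintype.card_fin, nsmul_eq_mul, hK]
    push_cast
    ring
  have hE0 : 0 ≤ E := by
    rw [hEdef]
    have h1 : (1:ℝ) ≤ K := by exact_mod_cast hk
    have h2 : (1:ℝ) ≤ d := by exact_mod_cast hd
    linarith
  have hEK : E ≤ (K:ℝ) + d := by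
    rw [hEdef]
    have h2 : (0:ℝ) ≤ d := Nat.cast_nonneg d
    linarith
  have hm0 : (0:ℝ) < m := by exact_mod_cast hm
  have hm1 : (1:ℝ) ≤ m := by exact_mod_cast hm
  -- step 1 : bound the sum
  have hsum : (∑ v ∈ (Finset.Nat.antidiagonalTuple d m).filter (fun v => ∀ j, k j ≤ 2 * v j),
      ∏ j, bterm (k j) (v j)) ≤ 2^K * 4^m * (6^d * ((m:ℝ)+1) ^ E) := by
    have step1 : ∀ v ∈ (Finset.Nat.antidiagonalTuple d m).filter (fun v => ∀ j, k j ≤ 2 * v j),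
        ∏ j, bterm (k j) (v j) ≤ 2^K * 4^m * ∏ j, ((v j:ℝ)+1) ^ (e j) := by
      intro v hv
      rw [Finset.mem_filter] at hv
      obtain ⟨hv1, hv2⟩ := hv
      rw [Finset.Nat.mem_antidiagonalTuple] at hv1
      calc ∏ j, bterm (k j) (v j)
          ≤ ∏ j, (2^(k j) * 4^(v j) * ((v j:ℝ)+1) ^ (e j)) := by
            apply Finset.prod_le_prod (fun j _ => bterm_nonneg _ _)
            intro j _
            exact bterm_upper (hv2 j)
        _ = (∏ j, (2:ℝ)^(k j)) * (∏ j, (4:ℝ)^(v j)) * ∏ j, ((v j:ℝ)+1) ^ (e j) := by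
            rw [← Finset.prod_mul_distrib, ← Finset.prod_mul_distrib]
        _ = 2^K * 4^m * ∏ j, ((v j:ℝ)+1) ^ (e j) := by
            rw [Finset.prod_pow_eq_pow_sum, Finset.prod_pow_eq_pow_sum, hv1, hK]
    calc ∑ v ∈ (Finset.Nat.antidiagonalTuple d m).filter (fun v => ∀ j, k j ≤ 2 * v j),
          ∏ j, bterm (k j) (v j)
        ≤ ∑ v ∈ (Finset.Nat.antidiagonalTuple d m).filter (fun v => ∀ j, k j ≤ 2 * v j),
          2^K * 4^m * ∏ j, ((v j:ℝ)+1) ^ (e j) := Finset.sum_le_sum step1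
      _ ≤ ∑ v ∈ Finset.Nat.antidiagonalTuple d m,
          2^K * 4^m * ∏ j, ((v j:ℝ)+1) ^ (e j) := by
          apply Finset.sum_le_sum_of_subset_of_nonneg (Finset.filter_subset _ _)
          intro v _ _
          have : (0:ℝ) ≤ ∏ j, ((v j:ℝ)+1) ^ (e j) :=
            Finset.prod_nonneg (fun j _ => Real.rpow_nonneg (by positivity) _)
          positivity
      _ = 2^K * 4^m * ∑ v ∈ Finset.Nat.antidiagonalTuple d m,
          ∏ j, ((v j:ℝ)+1) ^ (e j) := by rw [← Finset.mul_sum]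
      _ ≤ 2^K * 4^m * (6^d * ((m:ℝ)+1) ^ ((∑ j, e j) + d - 1)) := by
          apply mul_le_mul_of_nonneg_left (conv_tuple d hd e he2 m) (by positivity)
      _ = 2^K * 4^m * (6^d * ((m:ℝ)+1) ^ E) := by rw [hsume]
  have hpow2 : ((2:ℝ)^(2*m) : ℝ) = 4^m := by
    rw [pow_mul]; norm_num
  have hrpowE : ((m:ℝ)+1) ^ E ≤ (2:ℝ)^((K:ℝ)+d) * (m:ℝ)^E := by
    calc ((m:ℝ)+1) ^ E ≤ ((2:ℝ)*m) ^ E := by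
          apply Real.rpow_le_rpow (by positivity) (by linarith) hE0
      _ = (2:ℝ)^E * (m:ℝ)^E := Real.mul_rpow (by norm_num) hm0.le
      _ ≤ (2:ℝ)^((K:ℝ)+d) * (m:ℝ)^E := by
          apply mul_le_mul_of_nonneg_right _ (Real.rpow_nonneg hm0.le _)
          exact Real.rpow_le_rpow_of_exponent_le (by norm_num) hEK
  rw [beta_eq, hpow2]
  have h4 : (0:ℝ) < 4^m := by positivity
  have h2pi : (0:ℝ) < (2*π)^d := by positivity
  calc ((2*π)^d * 4^m)⁻¹ * ∑ v ∈ (Finset.Nat.antidiagonalTuple d m).filter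
          (fun v => ∀ j, k j ≤ 2 * v j), ∏ j, bterm (k j) (v j)
      ≤ ((2*π)^d * 4^m)⁻¹ * (2^K * 4^m * (6^d * ((m:ℝ)+1) ^ E)) := by
        apply mul_le_mul_of_nonneg_left hsum (by positivity)
    _ = ((2*π)^d)⁻¹ * 2^K * 6^d * ((m:ℝ)+1) ^ E := by
        field_simp
    _ ≤ ((2*π)^d)⁻¹ * 2^K * 6^d * ((2:ℝ)^((K:ℝ)+d) * (m:ℝ)^E) := by
        apply mul_le_mul_of_nonneg_left hrpowE (by positivity)
    _ = (((2*π)^d)⁻¹ * 2^K * 6^d * (2:ℝ)^((K:ℝ)+d)) * (m:ℝ)^E := by ring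

/-- For `d ≥ 1` and a multiindex `k` with `|k| ≥ 1`, there are
constants `0 < c ≤ C` and an integer `M` such that for all `m ≥ M` with `2m > |k|`,
`c m^{|k|+d/2-1} ≤ β_{2m-|k|,d} ≤ C m^{|k|+d/2-1}`. -/
theorem statement14 (d : ℕ) (hd : 1 ≤ d) (k : Fin d → ℕ) (hk : 1 ≤ ∑ j, k j) :
    ∃ c C : ℝ, ∃ M : ℕ, 0 < c ∧ c ≤ C ∧
      ∀ m : ℕ, M ≤ m → (∑ j, k j) < 2 * m →
        c * (m : ℝ) ^ (((∑ j, k j : ℕ) : ℝ) + (d : ℝ) / 2 - 1) ≤ betaConst d k m ∧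
        betaConst d k m ≤ C * (m : ℝ) ^ (((∑ j, k j : ℕ) : ℝ) + (d : ℝ) / 2 - 1) := by
  obtain ⟨c₀, hc₀, M₀, hM₀, hlow⟩ := beta_lower d hd k hk
  set C₀ : ℝ := ((2*π)^d)⁻¹ * 2^(∑ j, k j) * 6^d * (2:ℝ)^(((∑ j, k j : ℕ):ℝ)+d) with hC
  have hC0pos : 0 < C₀ := by
    rw [hC]
    have : (0:ℝ) < (2:ℝ)^(((∑ j, k j : ℕ):ℝ)+d) := Real.rpow_pos_of_pos (by norm_num) _
    positivity
  refine ⟨min c₀ C₀, max c₀ C₀, max M₀ 1, lt_min hc₀ hC0pos, min_le_of_left_le (le_max_left _ _), ?_⟩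
  intro m hm _hm2
  have hm1 : 1 ≤ m := le_trans (le_max_right _ _) hm
  have hrn : (0:ℝ) ≤ (m:ℝ) ^ (((∑ j, k j : ℕ):ℝ) + (d:ℝ)/2 - 1) :=
    Real.rpow_nonneg (Nat.cast_nonneg m) _
  constructor
  · calc min c₀ C₀ * (m:ℝ) ^ (((∑ j, k j : ℕ):ℝ) + (d:ℝ)/2 - 1)
        ≤ c₀ * (m:ℝ) ^ (((∑ j, k j : ℕ):ℝ) + (d:ℝ)/2 - 1) :=
          mul_le_mul_of_nonneg_right (min_le_left _ _) hrn
      _ ≤ betaConst d k m := hlow m (le_trans (le_max_left _ _) hm)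
  · calc betaConst d k m
        ≤ C₀ * (m:ℝ) ^ (((∑ j, k j : ℕ):ℝ) + (d:ℝ)/2 - 1) := beta_upper d hd k hk m hm1
      _ ≤ max c₀ C₀ * (m:ℝ) ^ (((∑ j, k j : ℕ):ℝ) + (d:ℝ)/2 - 1) :=
          mul_le_mul_of_nonneg_right (le_max_right _ _) hrn

end
end
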